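/- arXiv:1710.05690 — 3 statements merged into one kernel-verified Lean document; each statement's English description precedes it below -/
import Mathlib

section
/- In U_q(so5) with short simple root α (q_α = p = q^{1/2}) and long simple root β, let π_α(s) be the shifted extremal projector of the α-sl2-subalgebra and let \hat f_δ(s) = p^{-2}( f_α^2 f_β [s]_p/[s+2]_p − f_α f_β f_α [2]_p [s]_p/[s+1]_p + f_β f_α^2 ). Then f_α \hat f_δ(s+1) = \hat f_δ(s) ([s+1]_p/[s+3]_p) f_α. -/
/-! The difference `f_α·\hat f_δ(s+1) - ([s+1]_p/[s+3]_p)·\hat f_δ(s)·f_α` is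
`p⁻²[s+1]_p/[s+3]_p` times the short Serre element: the coefficients of `f_α² f_β f_α` and
`f_α f_β f_α²` match by the q-number identities `[3][s+2] - [2][s+3] = [s]` and
`[3][s+1] - [2][s] = [s+3]`. -/

noncomputable section

/-- `(u - u⁻¹)/(p - p⁻¹)`; with `u = p^z` this is the q-number `[z]_p`. -/
def qNum (p u : ℂ) : ℂ := (u - u⁻¹) / (p - p⁻¹)

/-- The dynamical root vector
`\hat f_δ(s) = p^{-2}( f_α² f_β [s]_p/[s+2]_p - f_α f_β f_α [2]_p [s]_p/[s+1]_p + f_β f_α² )`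
of `U_q(so5)`, with `t = p^s`. -/
def fdelta (p t : ℂ) {A : Type*} [Ring A] [Algebra ℂ A] (fa fb : A) : A :=
  (p ^ 2)⁻¹ • ((qNum p t / qNum p (t * p ^ 2)) • (fa * fa * fb)
    - (qNum p (p ^ 2) * qNum p t / qNum p (t * p)) • (fa * fb * fa)
    + fb * fa * fa)

section QNumber

variable {p u v : ℂ}

theorem ne_zero_of_qNum_ne_zero (h : qNum p u ≠ 0) : p ≠ 0 ∧ u ≠ 0 := by
  constructor <;> rintro rfl <;> simp [qNum] at h

theorem sq_sub_one_ne_zero_of_sub_inv_ne_zero (h : p - p⁻¹ ≠ 0) : p ^ 2 - 1 ≠ 0 := by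
  contrapose! h
  rw [sub_eq_zero] at h ⊢
  exact eq_inv_of_mul_eq_one_left (by rw [← sq, h])

-- With `u = p^a`, `v = p^b`: `[a+1][b] - [a][b+1] = [b-a]` and `[a+1][b+1] - [a][b] = [a+b+1]`.
theorem qNum_shift_mul_sub_mul_shift (hp : p ≠ 0) (hu : u ≠ 0) (hv : v ≠ 0) :
    qNum p (u * p) * qNum p v - qNum p u * qNum p (v * p) = qNum p (v / u) := by
  by_cases hd : p - p⁻¹ = 0
  · simp [qNum, hd]
  · have := sq_sub_one_ne_zero_of_sub_inv_ne_zero hd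
    unfold qNum
    field_simp
    ring

theorem qNum_shift_mul_shift_sub_mul (hp : p ≠ 0) (hu : u ≠ 0) (hv : v ≠ 0) :
    qNum p (u * p) * qNum p (v * p) - qNum p u * qNum p v = qNum p (u * v * p) := by
  by_cases hd : p - p⁻¹ = 0
  · simp [qNum, hd]
  · have := sq_sub_one_ne_zero_of_sub_inv_ne_zero hd
    unfold qNum
    field_simp
    ring

end QNumber

def shortSerre {A : Type*} [Ring A] [Algebra ℂ A] (p : ℂ) (fa fb : A) : A :=
  fa * fa * fa * fb - qNum p (p ^ 3) • (fa * fa * fb * fa)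
    + qNum p (p ^ 3) • (fa * fb * fa * fa) - fb * fa * fa * fa

theorem fa_mul_fdelta_sub_smul_fdelta_mul {A : Type*} [Ring A] [Algebra ℂ A] {p t : ℂ}
    (fa fb : A) (h1 : qNum p (t * p) ≠ 0) (h2 : qNum p (t * p ^ 2) ≠ 0)
    (h3 : qNum p (t * p ^ 3) ≠ 0) :
    fa * fdelta p (t * p) fa fb - (qNum p (t * p) / qNum p (t * p ^ 3)) • (fdelta p t fa fb * fa)
      = ((p ^ 2)⁻¹ * (qNum p (t * p) / qNum p (t * p ^ 3))) • shortSerre p fa fb := by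
  obtain ⟨hp, htp⟩ := ne_zero_of_qNum_ne_zero h1
  have ht : t ≠ 0 := left_ne_zero_of_mul htp
  have hp2 : p ^ 2 ≠ 0 := pow_ne_zero 2 hp
  have hshift : qNum p (p ^ 3) * qNum p (t * p ^ 2) - qNum p (p ^ 2) * qNum p (t * p ^ 3)
      = qNum p t := by
    have h := qNum_shift_mul_sub_mul_shift hp hp2 (mul_ne_zero ht hp2)
    rwa [mul_div_cancel_right₀ _ hp2, mul_assoc, ← pow_succ] at h
  have hsum : qNum p (p ^ 3) * qNum p (t * p) - qNum p (p ^ 2) * qNum p t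
      = qNum p (t * p ^ 3) := by
    have h := qNum_shift_mul_shift_sub_mul hp hp2 ht
    rwa [← pow_succ, mul_comm (p ^ 2) t, mul_assoc, ← pow_succ] at h
  rw [fdelta, fdelta, shortSerre, show t * p * p ^ 2 = t * p ^ 3 by ring,
    show t * p * p = t * p ^ 2 by ring]
  generalize qNum p t = c0, qNum p (t * p) = c1, qNum p (t * p ^ 2) = c2,
    qNum p (t * p ^ 3) = c3, qNum p (p ^ 2) = b2, qNum p (p ^ 3) = b3 at *
  simp only [smul_sub, smul_add, mul_sub, mul_add, sub_mul, add_mul,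
    mul_smul_comm, smul_mul_assoc, smul_smul, mul_assoc]
  match_scalars
  · field_simp
  · field_simp
    linear_combination hshift
  · field_simp
    linear_combination -hsum
  · field_simp

theorem fa_fdelta_commutation_general {A : Type*} [Ring A] [Algebra ℂ A]
    (p t : ℂ) (fa fb : A)
    (hSerreShort : fa * fa * fa * fb - qNum p (p ^ 3) • (fa * fa * fb * fa)
        + qNum p (p ^ 3) • (fa * fb * fa * fa) - fb * fa * fa * fa = 0)
    (hden : ∀ i : ℕ, 1 ≤ i → i ≤ 3 → qNum p (t * p ^ i) ≠ 0) :
    fa * fdelta p (t * p) fa fb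
      = (qNum p (t * p) / qNum p (t * p ^ 3)) • (fdelta p t fa fb * fa) := by
  rw [← sub_eq_zero, fa_mul_fdelta_sub_smul_fdelta_mul fa fb
    (by simpa using hden 1 le_rfl (by norm_num)) (hden 2 (by norm_num) (by norm_num))
    (hden 3 (by norm_num) le_rfl), shortSerre, hSerreShort, smul_zero]

/-- in (the negative part of) `U_q(so5)`, i.e. in any `ℂ`-algebra
generated by `f_α, f_β` satisfying the two B2 quantum Serre relations (`q = p²`),
one has `f_α·\hat f_δ(s+1) = \hat f_δ(s)·([s+1]_p/[s+3]_p)·f_α`. -/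
theorem fa_fdelta_commutation {A : Type*} [Ring A] [Algebra ℂ A]
    (p t : ℂ) (hp0 : p ≠ 0) (hp : ∀ n : ℕ, 0 < n → p ^ n ≠ 1) (ht : t ≠ 0)
    (fa fb : A)
    (hSerreLong : fb * fb * fa - (p ^ 2 + (p ^ 2)⁻¹) • (fb * fa * fb) + fa * fb * fb = 0)
    (hSerreShort : fa * fa * fa * fb - qNum p (p ^ 3) • (fa * fa * fb * fa)
        + qNum p (p ^ 3) • (fa * fb * fa * fa) - fb * fa * fa * fa = 0)
    (hden : ∀ i : ℕ, 1 ≤ i → i ≤ 3 → qNum p (t * p ^ i) ≠ 0) :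
    fa * fdelta p (t * p) fa fb
      = (qNum p (t * p) / qNum p (t * p ^ 3)) • (fdelta p t fa fb * fa) :=
  fa_fdelta_commutation_general p t fa fb hSerreShort hden
end
end

section
/- With \hat f_δ(s) as in the dynamical root vector of U_q(so5), the identity \hat f_δ(s) f_α^2 = ([s+4]_p [s+3]_p / ([s+2]_p [s+1]_p)) · f_α^2 · \hat f_δ(s+2) holds in the negative Borel part of U_q(so5). -/
noncomputable section

/-!
Multiplying the short Serre relation by `f_α` on the right and on the left expresses the two
extreme words `f_β f_α⁴` and `f_α⁴ f_β` through the three words `f_α^k f_β f_α^(4-k)`,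
`k = 1, 2, 3`. After this reduction both sides of the commutation relation are combinations of
those three words, and comparing coefficients leaves three identities between q-numbers,
`[3][s+1] - [2][s] = [s+3]`, `[3][s+3] - [2][s+4] = [s+1]` and
`[s+3][s+4] - [s][s+1] = [3][s+2]([s+3] - [s+1])`, all identities of Laurent polynomials in `p`
and `t`.
-/

section QNumber

variable {p t : ℂ}

theorem qNum_three_mul_add_one_sub_two_mul (hp0 : p ≠ 0) (hp : p ^ 2 ≠ 1) (ht : t ≠ 0) :
    qNum p (p ^ 3) * qNum p (t * p) - qNum p (p ^ 2) * qNum p t = qNum p (t * p ^ 3) := by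
  have : p ^ 2 - 1 ≠ 0 := sub_ne_zero.mpr hp
  simp only [qNum]
  field_simp
  ring

theorem qNum_three_mul_add_three_sub_two_mul_add_four (hp0 : p ≠ 0) (hp : p ^ 2 ≠ 1)
    (ht : t ≠ 0) :
    qNum p (p ^ 3) * qNum p (t * p ^ 3) - qNum p (p ^ 2) * qNum p (t * p ^ 4)
      = qNum p (t * p) := by
  have : p ^ 2 - 1 ≠ 0 := sub_ne_zero.mpr hp
  simp only [qNum]
  field_simp
  ring

theorem qNum_add_three_mul_add_four_sub_mul_add_one (hp0 : p ≠ 0) (hp : p ^ 2 ≠ 1)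
    (ht : t ≠ 0) :
    qNum p (t * p ^ 3) * qNum p (t * p ^ 4) - qNum p t * qNum p (t * p)
      = qNum p (p ^ 3) * qNum p (t * p ^ 2) * (qNum p (t * p ^ 3) - qNum p (t * p)) := by
  have : p ^ 2 - 1 ≠ 0 := sub_ne_zero.mpr hp
  simp only [qNum]
  field_simp
  ring

end QNumber

section Serre

variable {A : Type*} [Ring A] {fa fb : A}

theorem fb_mul_fa_pow_four_of_serre {R : Type*} [CommRing R] [Algebra R A] {c : R}
    (h : fa * fa * fa * fb - c • (fa * fa * fb * fa) + c • (fa * fb * fa * fa)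
      - fb * fa * fa * fa = 0) :
    fb * (fa * (fa * (fa * fa)))
      = fa * (fa * (fa * (fb * fa))) - c • (fa * (fa * (fb * (fa * fa))))
        + c • (fa * (fb * (fa * (fa * fa)))) := by
  have h := congrArg (· * fa) h
  simp only [sub_mul, add_mul, smul_mul_assoc, zero_mul, mul_assoc] at h
  exact (sub_eq_zero.mp h).symm

theorem fa_pow_four_mul_fb_of_serre {R : Type*} [CommRing R] [Algebra R A] {c : R}
    (h : fa * fa * fa * fb - c • (fa * fa * fb * fa) + c • (fa * fb * fa * fa)
      - fb * fa * fa * fa = 0) :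
    fa * (fa * (fa * (fa * fb)))
      = c • (fa * (fa * (fa * (fb * fa)))) - c • (fa * (fa * (fb * (fa * fa))))
        + fa * (fb * (fa * (fa * fa))) := by
  have h := congrArg (fa * ·) h
  simp only [mul_sub, mul_add, mul_smul_comm, mul_zero, mul_assoc] at h
  rw [← sub_eq_zero.mp h]
  abel

/-- With `c = [3]`, `c₂ = [2]` and `qᵢ = [s+i]` the two brackets are `p² \hat f_δ(s)` and
`p² \hat f_δ(s+2)`. -/
theorem root_vector_mul_sq_of_serre {K : Type*} [Field K] [Algebra K A]
    {c c₂ q₀ q₁ q₂ q₃ q₄ : K}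
    (h : fa * fa * fa * fb - c • (fa * fa * fb * fa) + c • (fa * fb * fa * fa)
      - fb * fa * fa * fa = 0)
    (hq₁ : q₁ ≠ 0) (hq₂ : q₂ ≠ 0) (hq₃ : q₃ ≠ 0) (hq₄ : q₄ ≠ 0)
    (h₁ : c * q₁ - c₂ * q₀ = q₃) (h₂ : c * q₃ - c₂ * q₄ = q₁)
    (h₃ : q₃ * q₄ - q₀ * q₁ = c * q₂ * (q₃ - q₁)) :
    ((q₀ / q₂) • (fa * fa * fb) - (c₂ * q₀ / q₁) • (fa * fb * fa) + fb * fa * fa) * (fa * fa)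
      = (q₄ * q₃ / (q₂ * q₁)) • (fa * fa *
          ((q₂ / q₄) • (fa * fa * fb) - (c₂ * q₂ / q₃) • (fa * fb * fa) + fb * fa * fa)) := by
  simp only [smul_mul_assoc, sub_mul, add_mul, mul_smul_comm, mul_sub, mul_add, mul_assoc]
  rw [fb_mul_fa_pow_four_of_serre h, fa_pow_four_mul_fb_of_serre h]
  match_scalars <;> field_simp
  · linear_combination -h₃
  · linear_combination h₁
  · linear_combination -h₂

end Serre

theorem fdelta_fa_sq_commutation_general {A : Type*} [Ring A] [Algebra ℂ A]
    (p t : ℂ) (hp0 : p ≠ 0) (hp : ∀ n : ℕ, 0 < n → p ^ n ≠ 1) (ht : t ≠ 0)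
    (fa fb : A)
    (hSerreShort : fa * fa * fa * fb - qNum p (p ^ 3) • (fa * fa * fb * fa)
        + qNum p (p ^ 3) • (fa * fb * fa * fa) - fb * fa * fa * fa = 0)
    (hden : ∀ i : ℕ, 1 ≤ i → i ≤ 4 → qNum p (t * p ^ i) ≠ 0) :
    fdelta p t fa fb * (fa * fa)
      = (qNum p (t * p ^ 4) * qNum p (t * p ^ 3) / (qNum p (t * p ^ 2) * qNum p (t * p))) •
          (fa * fa * fdelta p (t * p ^ 2) fa fb) := by
  have hp2 : p ^ 2 ≠ 1 := hp 2 two_pos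
  have hq₁ : qNum p (t * p) ≠ 0 := by simpa using hden 1 le_rfl (by norm_num)
  simp only [fdelta, show t * p ^ 2 * p ^ 2 = t * p ^ 4 by ring,
    show t * p ^ 2 * p = t * p ^ 3 by ring, smul_mul_assoc, mul_smul_comm, smul_comm _ (p ^ 2)⁻¹]
  congr 1
  exact root_vector_mul_sq_of_serre hSerreShort hq₁ (hden 2 (by norm_num) (by norm_num))
    (hden 3 (by norm_num) (by norm_num)) (hden 4 (by norm_num) le_rfl)
    (qNum_three_mul_add_one_sub_two_mul hp0 hp2 ht)
    (qNum_three_mul_add_three_sub_two_mul_add_four hp0 hp2 ht)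
    (qNum_add_three_mul_add_four_sub_mul_add_one hp0 hp2 ht)

/-- in the negative Borel part of `U_q(so5)` (any `ℂ`-algebra generated by
`f_α, f_β` with the two B2 quantum Serre relations, `q = p²`),
`\hat f_δ(s)·f_α² = ([s+4]_p[s+3]_p/([s+2]_p[s+1]_p))·f_α²·\hat f_δ(s+2)`. -/
theorem fdelta_fa_sq_commutation {A : Type*} [Ring A] [Algebra ℂ A]
    (p t : ℂ) (hp0 : p ≠ 0) (hp : ∀ n : ℕ, 0 < n → p ^ n ≠ 1) (ht : t ≠ 0)
    (fa fb : A)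
    (hSerreLong : fb * fb * fa - (p ^ 2 + (p ^ 2)⁻¹) • (fb * fa * fb) + fa * fb * fb = 0)
    (hSerreShort : fa * fa * fa * fb - qNum p (p ^ 3) • (fa * fa * fb * fa)
        + qNum p (p ^ 3) • (fa * fb * fa * fa) - fb * fa * fa * fa = 0)
    (hden : ∀ i : ℕ, 1 ≤ i → i ≤ 4 → qNum p (t * p ^ i) ≠ 0) :
    fdelta p t fa fb * (fa * fa)
      = (qNum p (t * p ^ 4) * qNum p (t * p ^ 3) / (qNum p (t * p ^ 2) * qNum p (t * p))) •
          (fa * fa * fdelta p (t * p ^ 2) fa fb) :=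
  fdelta_fa_sq_commutation_general p t hp0 hp ht fa fb hSerreShort hden
end
end

section
/- Let q be not a root of unity, p = q^{1/2}, and let \hat M_μ be the Verma module over U_q(so5) of highest weight μ, where δ = ε_1 + ε_2, and suppose [(μ,δ)+1]_q = 0. Then the vector π_α(2h_α+1) f_δ 1_μ = q^{-1}\hat f_δ(s) 1_μ, with s = 2(μ,α)−1, is singular: it is annihilated by both e_{α_1} and e_{α_2}. -/
noncomputable section

set_option maxHeartbeats 1000000 in
/-- case `m = 1`: in a `U_q(so5)`-Verma module (`q = p²`, `α = ε₁` short,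
`β = ε₂-ε₁` long, `δ = ε₁+ε₂`) with highest weight vector `v = 1_μ`
(`p^{2h_α} v = a • v` with `a = p^{2(μ,α)}`, `q^{h_β} v = b • v` with `b = q^{(μ,β)}`),
if `[(μ,δ)+1]_q = 0` — i.e. `(q^{(μ,δ)+1})² = (a²bq)² = 1` — then the vector
`π_α(2h_α+1) f_δ 1_μ = q^{-1}\hat f_δ(s) 1_μ`, `s = 2(μ,α)-1` (so `t = p^s = a p⁻¹`),
is singular: it is annihilated by both `e_{α}` and `e_{β}`. -/
theorem singular_vector_m1 {V : Type*} [AddCommGroup V] [Module ℂ V]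
    (p a b : ℂ) (hp0 : p ≠ 0) (hp : ∀ n : ℕ, 0 < n → p ^ n ≠ 1)
    (ha : a ≠ 0) (hb : b ≠ 0)
    (Ea Eb Fa Fb Ka Kai Kb Kbi : Module.End ℂ V)
    (hKa : Ka * Kai = 1) (hKai : Kai * Ka = 1)
    (hKb : Kb * Kbi = 1) (hKbi : Kbi * Kb = 1)
    (hKaEa : Ka * Ea = (p ^ 2) • (Ea * Ka)) (hKaFa : Ka * Fa = (p ^ 2)⁻¹ • (Fa * Ka))
    (hKaEb : Ka * Eb = (p ^ 2)⁻¹ • (Eb * Ka)) (hKaFb : Ka * Fb = (p ^ 2) • (Fb * Ka))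
    (hKbEb : Kb * Eb = ((p ^ 2) ^ 2) • (Eb * Kb))
    (hKbFb : Kb * Fb = ((p ^ 2) ^ 2)⁻¹ • (Fb * Kb))
    (hKbEa : Kb * Ea = (p ^ 2)⁻¹ • (Ea * Kb)) (hKbFa : Kb * Fa = (p ^ 2) • (Fa * Kb))
    (hEaFa : Ea * Fa - Fa * Ea = (p - p⁻¹)⁻¹ • (Ka - Kai))
    (hEbFb : Eb * Fb - Fb * Eb = (p ^ 2 - (p ^ 2)⁻¹)⁻¹ • (Kb - Kbi))
    (hEaFb : Ea * Fb = Fb * Ea) (hEbFa : Eb * Fa = Fa * Eb)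
    (hSerreLong : Fb * Fb * Fa - (p ^ 2 + (p ^ 2)⁻¹) • (Fb * Fa * Fb) + Fa * Fb * Fb = 0)
    (hSerreShort : Fa * Fa * Fa * Fb - qNum p (p ^ 3) • (Fa * Fa * Fb * Fa)
        + qNum p (p ^ 3) • (Fa * Fb * Fa * Fa) - Fb * Fa * Fa * Fa = 0)
    (v : V) (hEav : Ea v = 0) (hEbv : Eb v = 0)
    (hKav : Ka v = a • v) (hKbv : Kb v = b • v)
    (hcond : (a ^ 2 * b * p ^ 2) ^ 2 = 1)
    (hd1 : qNum p a ≠ 0) (hd2 : qNum p (a * p) ≠ 0) :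
    Ea ((fdelta p (a * p⁻¹) Fa Fb) v) = 0 ∧ Eb ((fdelta p (a * p⁻¹) Fa Fb) v) = 0 := by
  -- nonvanishing facts
  have hp2 : (p:ℂ) ^ 2 ≠ 0 := pow_ne_zero _ hp0
  have hpp2 : p ^ 2 ≠ 1 := hp 2 (by norm_num)
  have hpp4 : p ^ 4 ≠ 1 := hp 4 (by norm_num)
  have hP2 : p ^ 2 - 1 ≠ 0 := sub_ne_zero.mpr hpp2
  have hP4 : p ^ 4 - 1 ≠ 0 := sub_ne_zero.mpr hpp4
  have hp1 : p - p⁻¹ ≠ 0 := by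
    intro h
    apply hpp2
    have h' : p = p⁻¹ := sub_eq_zero.mp h
    have hmul : p * p = 1 := by nth_rewrite 2 [h']; exact mul_inv_cancel₀ hp0
    rw [sq]; exact hmul
  have hq1 : p ^ 2 - (p ^ 2)⁻¹ ≠ 0 := by
    intro h
    apply hpp4
    have h' : p ^ 2 = (p ^ 2)⁻¹ := sub_eq_zero.mp h
    have hmul : p ^ 2 * p ^ 2 = 1 := by nth_rewrite 2 [h']; exact mul_inv_cancel₀ hp2
    calc p ^ 4 = p ^ 2 * p ^ 2 := by ring
      _ = 1 := hmul
  have ha2 : a * p ^ 2 ≠ 0 := mul_ne_zero ha hp2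
  have ha3 : a * (p ^ 2)⁻¹ ≠ 0 := mul_ne_zero ha (inv_ne_zero hp2)
  have hb2 : b * p ^ 2 ≠ 0 := mul_ne_zero hb hp2
  have hb4 : b * p ^ 2 * p ^ 2 ≠ 0 := mul_ne_zero hb2 hp2
  -- clearing lemmas for the q-numbers involved
  have hq_a : qNum p a * (a * (p ^ 2 - 1)) = p * (a ^ 2 - 1) := by
    simp only [qNum]; rw [div_mul_eq_mul_div, div_eq_iff hp1]; field_simp
  have hq_api : qNum p (a * p⁻¹) * (a * p * (p ^ 2 - 1)) = a ^ 2 * p - p ^ 3 := by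
    simp only [qNum]; rw [div_mul_eq_mul_div, div_eq_iff hp1]; field_simp
  have hq_ap : qNum p (a * p) * (a * p * (p ^ 2 - 1)) = p * (a ^ 2 * p ^ 2 - 1) := by
    simp only [qNum]; rw [div_mul_eq_mul_div, div_eq_iff hp1]; field_simp
  have hq_ap2 : qNum p (a * p ^ 2) * (a * p ^ 2 * (p ^ 2 - 1)) = p * (a ^ 2 * p ^ 4 - 1) := by
    simp only [qNum]; rw [div_mul_eq_mul_div, div_eq_iff hp1]; field_simp
  have hq_ap2i : qNum p (a * (p ^ 2)⁻¹) * (a * p ^ 2 * (p ^ 2 - 1)) = a ^ 2 * p - p ^ 5 := by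
    simp only [qNum]; rw [div_mul_eq_mul_div, div_eq_iff hp1]; field_simp
  have hq_p2 : qNum p (p ^ 2) * (p * (p ^ 2 - 1)) = p ^ 4 - 1 := by
    simp only [qNum]; rw [div_mul_eq_mul_div, div_eq_iff hp1]; field_simp
  have hqq_b : qNum (p ^ 2) b * (b * (p ^ 4 - 1)) = p ^ 2 * (b ^ 2 - 1) := by
    simp only [qNum]; rw [div_mul_eq_mul_div, div_eq_iff hq1]; field_simp
  have hqq_bp2 : qNum (p ^ 2) (b * p ^ 2) * (b * p ^ 2 * (p ^ 4 - 1))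
      = p ^ 2 * (b ^ 2 * p ^ 4 - 1) := by
    simp only [qNum]; rw [div_mul_eq_mul_div, div_eq_iff hq1]; field_simp
  have hqq_bp4 : qNum (p ^ 2) (b * p ^ 2 * p ^ 2) * (b * p ^ 4 * (p ^ 4 - 1))
      = p ^ 2 * (b ^ 2 * p ^ 8 - 1) := by
    simp only [qNum]; rw [div_mul_eq_mul_div, div_eq_iff hq1]; field_simp
  -- pointwise commutation relations
  have hEaFa' : ∀ w : V, Ea (Fa w) = (p - p⁻¹)⁻¹ • (Ka w - Kai w) + Fa (Ea w) := by
    intro w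
    have h := LinearMap.congr_fun hEaFa w
    simp only [LinearMap.sub_apply, Module.End.mul_apply, LinearMap.smul_apply] at h
    exact sub_eq_iff_eq_add.mp h
  have hEbFb' : ∀ w : V,
      Eb (Fb w) = (p ^ 2 - (p ^ 2)⁻¹)⁻¹ • (Kb w - Kbi w) + Fb (Eb w) := by
    intro w
    have h := LinearMap.congr_fun hEbFb w
    simp only [LinearMap.sub_apply, Module.End.mul_apply, LinearMap.smul_apply] at h
    exact sub_eq_iff_eq_add.mp h
  have hEaFb' : ∀ w : V, Ea (Fb w) = Fb (Ea w) := by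
    intro w
    have h := LinearMap.congr_fun hEaFb w
    simpa only [Module.End.mul_apply] using h
  have hEbFa' : ∀ w : V, Eb (Fa w) = Fa (Eb w) := by
    intro w
    have h := LinearMap.congr_fun hEbFa w
    simpa only [Module.End.mul_apply] using h
  have hKaFa' : ∀ w : V, Ka (Fa w) = (p ^ 2)⁻¹ • Fa (Ka w) := by
    intro w
    have h := LinearMap.congr_fun hKaFa w
    simpa only [Module.End.mul_apply, LinearMap.smul_apply] using h
  have hKaFb' : ∀ w : V, Ka (Fb w) = (p ^ 2) • Fb (Ka w) := by
    intro w
    have h := LinearMap.congr_fun hKaFb w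
    simpa only [Module.End.mul_apply, LinearMap.smul_apply] using h
  have hKbFa' : ∀ w : V, Kb (Fa w) = (p ^ 2) • Fa (Kb w) := by
    intro w
    have h := LinearMap.congr_fun hKbFa w
    simpa only [Module.End.mul_apply, LinearMap.smul_apply] using h
  -- inverse of an eigenvalue
  have inv_eig : ∀ (K Ki : Module.End ℂ V), Ki * K = 1 → ∀ (w : V) (c : ℂ),
      c ≠ 0 → K w = c • w → Ki w = c⁻¹ • w := by
    intro K Ki h w c hc hw
    have h1 : Ki (K w) = w := by
      have := LinearMap.congr_fun h w
      simpa only [Module.End.mul_apply, Module.End.one_apply] using this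
    rw [hw, map_smul] at h1
    calc Ki w = c⁻¹ • (c • Ki w) := by rw [smul_smul, inv_mul_cancel₀ hc, one_smul]
      _ = c⁻¹ • w := by rw [h1]
  -- eigenvalues
  have kFa : Ka (Fa v) = (a * (p ^ 2)⁻¹) • Fa v := by
    rw [hKaFa' v, hKav, map_smul, smul_smul, mul_comm]
  have kFb : Ka (Fb v) = (a * p ^ 2) • Fb v := by
    rw [hKaFb' v, hKav, map_smul, smul_smul, mul_comm]
  have kFaFb : Ka (Fa (Fb v)) = a • Fa (Fb v) := by
    rw [hKaFa' (Fb v), kFb, map_smul, smul_smul]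
    congr 1
    field_simp
  have kFbFa : Ka (Fb (Fa v)) = a • Fb (Fa v) := by
    rw [hKaFb' (Fa v), kFa, map_smul, smul_smul]
    congr 1
    field_simp
  have kbFa : Kb (Fa v) = (b * p ^ 2) • Fa v := by
    rw [hKbFa' v, hKbv, map_smul, smul_smul, mul_comm]
  have kbFaFa : Kb (Fa (Fa v)) = (b * p ^ 2 * p ^ 2) • Fa (Fa v) := by
    rw [hKbFa' (Fa v), kbFa, map_smul, smul_smul]
    congr 1
    ring
  have kiv := inv_eig Ka Kai hKai v a ha hKav
  have kiFa := inv_eig Ka Kai hKai (Fa v) _ ha3 kFa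
  have kiFb := inv_eig Ka Kai hKai (Fb v) _ ha2 kFb
  have kiFaFb := inv_eig Ka Kai hKai (Fa (Fb v)) a ha kFaFb
  have kiFbFa := inv_eig Ka Kai hKai (Fb (Fa v)) a ha kFbFa
  have kbiv := inv_eig Kb Kbi hKbi v b hb hKbv
  have kbiFa := inv_eig Kb Kbi hKbi (Fa v) _ hb2 kbFa
  have kbiFaFa := inv_eig Kb Kbi hKbi (Fa (Fa v)) _ hb4 kbFaFa
  -- Ea on the monomials
  have E1 : Ea (Fa v) = qNum p a • v := by
    rw [hEaFa' v, hEav, map_zero, add_zero, hKav, kiv]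
    simp only [qNum]
    module
  have E2 : Ea (Fb v) = 0 := by rw [hEaFb' v, hEav, map_zero]
  have E3 : Ea (Fa (Fb v)) = qNum p (a * p ^ 2) • Fb v := by
    rw [hEaFa' (Fb v), E2, map_zero, add_zero, kFb, kiFb]
    simp only [qNum]
    module
  have E4 : Ea (Fa (Fa (Fb v))) = (qNum p (a * p ^ 2) + qNum p a) • Fa (Fb v) := by
    rw [hEaFa' (Fa (Fb v)), E3, map_smul, kFaFb, kiFaFb]
    simp only [qNum]
    module
  have E5 : Ea (Fb (Fa v)) = qNum p a • Fb v := by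
    rw [hEaFb' (Fa v), E1, map_smul]
  have E6 : Ea (Fa (Fb (Fa v))) = qNum p a • Fa (Fb v) + qNum p a • Fb (Fa v) := by
    rw [hEaFa' (Fb (Fa v)), E5, map_smul, kFbFa, kiFbFa]
    simp only [qNum]
    module
  have E7 : Ea (Fa (Fa v)) = (qNum p a + qNum p (a * (p ^ 2)⁻¹)) • Fa v := by
    rw [hEaFa' (Fa v), E1, map_smul, kFa, kiFa]
    simp only [qNum]
    module
  have E8 : Ea (Fb (Fa (Fa v))) = (qNum p a + qNum p (a * (p ^ 2)⁻¹)) • Fb (Fa v) := by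
    rw [hEaFb' (Fa (Fa v)), E7, map_smul]
  -- Eb on the monomials
  have F0 : Eb (Fa v) = 0 := by rw [hEbFa' v, hEbv, map_zero]
  have F0' : Eb (Fa (Fa v)) = 0 := by rw [hEbFa' (Fa v), F0, map_zero]
  have F1 : Eb (Fb v) = qNum (p ^ 2) b • v := by
    rw [hEbFb' v, hEbv, map_zero, add_zero, hKbv, kbiv]
    simp only [qNum]
    module
  have F2 : Eb (Fa (Fb v)) = qNum (p ^ 2) b • Fa v := by
    rw [hEbFa' (Fb v), F1, map_smul]
  have F3 : Eb (Fa (Fa (Fb v))) = qNum (p ^ 2) b • Fa (Fa v) := by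
    rw [hEbFa' (Fa (Fb v)), F2, map_smul]
  have F4 : Eb (Fb (Fa v)) = qNum (p ^ 2) (b * p ^ 2) • Fa v := by
    rw [hEbFb' (Fa v), F0, map_zero, add_zero, kbFa, kbiFa]
    simp only [qNum]
    module
  have F5 : Eb (Fa (Fb (Fa v))) = qNum (p ^ 2) (b * p ^ 2) • Fa (Fa v) := by
    rw [hEbFa' (Fb (Fa v)), F4, map_smul]
  have F6 : Eb (Fb (Fa (Fa v))) = qNum (p ^ 2) (b * p ^ 2 * p ^ 2) • Fa (Fa v) := by
    rw [hEbFb' (Fa (Fa v)), F0', map_zero, add_zero, kbFaFa, kbiFaFa]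
    simp only [qNum]
    module
  -- the vector fdelta v
  have e1 : a * p⁻¹ * p = a := by field_simp
  have e2 : a * p⁻¹ * p ^ 2 = a * p := by
    field_simp
  have hfd : (fdelta p (a * p⁻¹) Fa Fb) v
      = (p ^ 2)⁻¹ • ((qNum p (a * p⁻¹) / qNum p (a * p)) • Fa (Fa (Fb v))
        - (qNum p (p ^ 2) * qNum p (a * p⁻¹) / qNum p a) • Fa (Fb (Fa v))
        + Fb (Fa (Fa v))) := by
    simp only [fdelta, e1, e2, LinearMap.smul_apply, LinearMap.sub_apply,
      LinearMap.add_apply, Module.End.mul_apply]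
  constructor
  · -- Ea kills it
    rw [hfd]
    simp only [map_smul, map_add, map_sub]
    rw [E4, E6, E8]
    have idA : qNum p (a * p⁻¹) * (qNum p (a * p ^ 2) + qNum p a)
        = qNum p (p ^ 2) * qNum p (a * p⁻¹) * qNum p (a * p) := by
      have hM : (a ^ 2 * p ^ 3 * (p ^ 2 - 1) ^ 3 : ℂ) ≠ 0 :=
        mul_ne_zero (mul_ne_zero (pow_ne_zero _ ha) (pow_ne_zero _ hp0)) (pow_ne_zero _ hP2)
      refine mul_left_cancel₀ hM ?_
      linear_combination
        ((p^2-1)*(a*p^2*(p^2-1))*(qNum p (a*p^2)) + p^2*(p^2-1)*(a*(p^2-1))*(qNum p a)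
          - (p^4-1)*(a*p*(p^2-1))*(qNum p (a*p))) * hq_api
        + ((p^2-1)*(a^2*p-p^3)) * hq_ap2
        + (p^2*(p^2-1)*(a^2*p-p^3)) * hq_a
        - ((qNum p (a*p⁻¹))*(a*p*(p^2-1))*((qNum p (a*p))*(a*p*(p^2-1)))) * hq_p2
        - ((p^4-1)*(a^2*p-p^3)) * hq_ap
    have idB : qNum p a + qNum p (a * (p ^ 2)⁻¹) = qNum p (p ^ 2) * qNum p (a * p⁻¹) := by
      have hM : (a * p ^ 2 * (p ^ 2 - 1) ^ 2 : ℂ) ≠ 0 :=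
        mul_ne_zero (mul_ne_zero ha hp2) (pow_ne_zero _ hP2)
      refine mul_left_cancel₀ hM ?_
      linear_combination
        (p^2*(p^2-1)) * hq_a + (p^2-1) * hq_ap2i
        - ((qNum p (a*p⁻¹))*(a*p*(p^2-1))) * hq_p2 - (p^4-1) * hq_api
    have hS1 : (p ^ 2)⁻¹ * ((qNum p (a * p⁻¹) / qNum p (a * p)) * (qNum p (a * p ^ 2) + qNum p a)
        - (qNum p (p ^ 2) * qNum p (a * p⁻¹) / qNum p a) * qNum p a) = 0 := by
      rw [div_mul_cancel₀ _ hd1, mul_eq_zero]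
      right
      rw [sub_eq_zero, div_mul_eq_mul_div, div_eq_iff hd2]
      exact idA
    have hS2 : (p ^ 2)⁻¹ * ((qNum p a + qNum p (a * (p ^ 2)⁻¹))
        - (qNum p (p ^ 2) * qNum p (a * p⁻¹) / qNum p a) * qNum p a) = 0 := by
      rw [div_mul_cancel₀ _ hd1, idB, sub_self, mul_zero]
    trans ((p ^ 2)⁻¹ * ((qNum p (a * p⁻¹) / qNum p (a * p)) * (qNum p (a * p ^ 2) + qNum p a)
        - (qNum p (p ^ 2) * qNum p (a * p⁻¹) / qNum p a) * qNum p a)) • Fa (Fb v)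
      + ((p ^ 2)⁻¹ * ((qNum p a + qNum p (a * (p ^ 2)⁻¹))
        - (qNum p (p ^ 2) * qNum p (a * p⁻¹) / qNum p a) * qNum p a)) • Fb (Fa v)
    · module
    · rw [hS1, hS2, zero_smul, zero_smul, add_zero]
  · -- Eb kills it
    rw [hfd]
    simp only [map_smul, map_add, map_sub]
    rw [F3, F5, F6]
    have hbb : b ^ 2 * a ^ 4 * p ^ 4 = 1 := by linear_combination hcond
    have idC : qNum p (a*p⁻¹) * qNum (p^2) b * qNum p a
        - qNum p (a*p) * (qNum p (p^2) * qNum p (a*p⁻¹) * qNum (p^2) (b*p^2))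
        + qNum (p^2) (b*p^2*p^2) * (qNum p (a*p) * qNum p a) = 0 := by
      have hM : (a^2*b*p^5*(p^2-1)^3*(p^4-1) : ℂ) ≠ 0 :=
        mul_ne_zero (mul_ne_zero (mul_ne_zero (mul_ne_zero (pow_ne_zero _ ha) hb)
          (pow_ne_zero _ hp0)) (pow_ne_zero _ hP2)) hP4
      refine mul_left_cancel₀ hM ?_
      linear_combination
        (p^4*(p^2-1)*(qNum (p^2) b * (b*(p^4-1)))*(qNum p a * (a*(p^2-1)))
          - p*(a^2*p^2-1)*(p^4-1)*(qNum (p^2) (b*p^2) * (b*p^2*(p^4-1)))) * hq_api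
        + (p^4*(p^2-1)*(a^2*p-p^3)*(qNum p a * (a*(p^2-1)))) * hqq_b
        + (p^4*(p^2-1)*(a^2*p-p^3)*(p^2*(b^2-1))
            + (p^2-1)*(p^2*(b^2*p^8-1))*(p*(a^2*p^2-1))) * hq_a
        + (-(qNum p (p^2) * (p*(p^2-1)))*(qNum p (a*p⁻¹) * (a*p*(p^2-1)))*(qNum (p^2) (b*p^2) * (b*p^2*(p^4-1)))
            + (p^2-1)*(p^2*(b^2*p^8-1))*(qNum p a * (a*(p^2-1)))) * hq_ap
        + (-(p*(a^2*p^2-1))*(qNum p (a*p⁻¹) * (a*p*(p^2-1)))*(qNum (p^2) (b*p^2) * (b*p^2*(p^4-1)))) * hq_p2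
        + (-(p*(a^2*p^2-1))*(p^4-1)*(a^2*p-p^3)) * hqq_bp2
        + ((p^2-1)*(qNum p (a*p) * (a*p*(p^2-1)))*(qNum p a * (a*(p^2-1)))) * hqq_bp4
        + (p^2*(p^4*(p^2-1)*(a^2*p-p^3)*(p*(a^2-1))
            - (p*(a^2*p^2-1))*(p^4-1)*(a^2*p-p^3)
            + (p^2-1)*(p*(a^2*p^2-1))*(p*(a^2-1)))) * hbb
    have hS3 : (p ^ 2)⁻¹ * ((qNum p (a * p⁻¹) / qNum p (a * p)) * qNum (p ^ 2) b
        - (qNum p (p ^ 2) * qNum p (a * p⁻¹) / qNum p a) * qNum (p ^ 2) (b * p ^ 2)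
        + qNum (p ^ 2) (b * p ^ 2 * p ^ 2)) = 0 := by
      rw [mul_eq_zero]
      right
      rw [div_mul_eq_mul_div, div_mul_eq_mul_div, div_sub_div _ _ hd2 hd1,
        div_add' _ _ _ (mul_ne_zero hd2 hd1), div_eq_zero_iff]
      left
      linear_combination idC
    trans ((p ^ 2)⁻¹ * ((qNum p (a * p⁻¹) / qNum p (a * p)) * qNum (p ^ 2) b
        - (qNum p (p ^ 2) * qNum p (a * p⁻¹) / qNum p a) * qNum (p ^ 2) (b * p ^ 2)
        + qNum (p ^ 2) (b * p ^ 2 * p ^ 2))) • Fa (Fa v)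
    · module
    · rw [hS3, zero_smul]
end
end
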